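/- Let d ≥ 2, 0 < μ < 1, and 0 < α < 2/(d(1+μ)−2). Then there exist real numbers θ, θ̃ > 1, υ, υ̃ ∈ [0,1], and β_0 ∈ [1, d(1+μ)/(d(1+μ)−2)) such that, setting r = (d(θ−1)+2)/2, r̃ = (d(θ̃−1)+2)/2, p = θβ_0/(α(θ+υ−θυ)), and p̃ = θ̃β_0/(α(θ̃+υ̃−θ̃υ̃)), one has p > d, p̃ > d/2, and ((2+2μ)·r·υ·α)/((1−μ)·θ·β_0) + ((2+2μ)·r̃·υ̃·α)/((1−μ)·θ̃·β_0) < 1. -/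

import Mathlib

/-!
Take `υ̃ = 0` and `θ̃ = 2`, so that the second summand vanishes and `p̃ = β₀ / α`, and take
`υ = (1 - μ) / 2`. This choice of `υ` balances the two remaining constraints: for large `θ`,
`p > d` asks for `β₀ > d α (1 - υ)`, while the first summand (using `r ≤ d θ / 2`) asks for
`β₀ > (1 + μ) d α υ / (1 - μ)`, and both thresholds equal `α d (1 + μ) / 2`. A `β₀ ≥ 1` above this
threshold and below `d (1 + μ) / (d (1 + μ) - 2)` exists precisely because
`α < 2 / (d (1 + μ) - 2)`; then any sufficiently large `θ` works.
-/

lemma mul_div_two_lt_div_sub_two {D α : ℝ} (hD : 0 < D - 2) (hα : α < 2 / (D - 2)) :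
    α * D / 2 < D / (D - 2) :=
  calc α * D / 2 < 2 / (D - 2) * D / 2 := by gcongr; linarith
    _ = D / (D - 2) := by ring

lemma exists_one_lt_add_lt_mul {a b e : ℝ} (hab : a < b) (he : 0 ≤ e) :
    ∃ θ, 1 < θ ∧ a * θ + e < b * θ := by
  have hba : 0 < b - a := sub_pos.2 hab
  refine ⟨2 + e / (b - a), by linarith [div_nonneg he hba.le], ?_⟩
  have h : b * (2 + e / (b - a)) - (a * (2 + e / (b - a)) + e) = 2 * (b - a) := by
    field_simp; ring
  linarith

lemma summand_with_half_one_sub_lt_one {d μ α θ β : ℝ} (hd : 2 ≤ d) (hμ0 : 0 ≤ μ) (hμ1 : μ < 1)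
    (hα : 0 ≤ α) (hθ : 0 < θ) (hβ : α * d * (1 + μ) / 2 < β) :
    (2 + 2 * μ) * ((d * (θ - 1) + 2) / 2) * ((1 - μ) / 2) * α / ((1 - μ) * θ * β) < 1 := by
  have hβ0 : 0 < β := lt_of_le_of_lt (by positivity) hβ
  have hμ : 0 < 1 - μ := sub_pos.2 hμ1
  rw [div_lt_one (by positivity)]
  have hr : d * (θ - 1) + 2 ≤ d * θ := by linarith
  have hθβ : θ * (α * d * (1 + μ)) < θ * (2 * β) := mul_lt_mul_of_pos_left (by linarith) hθ
  calc (2 + 2 * μ) * ((d * (θ - 1) + 2) / 2) * ((1 - μ) / 2) * α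
      = (1 - μ) / 2 * ((1 + μ) * α * (d * (θ - 1) + 2)) := by ring
    _ ≤ (1 - μ) / 2 * ((1 + μ) * α * (d * θ)) := by gcongr
    _ < (1 - μ) / 2 * (θ * (2 * β)) := mul_lt_mul_of_pos_left (by linarith) (by positivity)
    _ = (1 - μ) * θ * β := by ring

theorem stmt_19 (d : ℕ) (hd : 2 ≤ d) (μ α : ℝ) (hμ0 : 0 < μ) (hμ1 : μ < 1)
    (hden : 0 < d * (1 + μ) - 2)
    (hα0 : 0 < α) (hα : α < 2 / (d * (1 + μ) - 2)) :
    ∃ θ θt υ υt β₀ : ℝ, 1 < θ ∧ 1 < θt ∧ 0 ≤ υ ∧ υ ≤ 1 ∧ 0 ≤ υt ∧ υt ≤ 1 ∧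
      1 ≤ β₀ ∧ β₀ < d * (1 + μ) / (d * (1 + μ) - 2) ∧
      (d : ℝ) < θ * β₀ / (α * (θ + υ - θ * υ)) ∧
      (d : ℝ) / 2 < θt * β₀ / (α * (θt + υt - θt * υt)) ∧
      ((2 + 2 * μ) * ((d * (θ - 1) + 2) / 2) * υ * α) / ((1 - μ) * θ * β₀) +
        ((2 + 2 * μ) * ((d * (θt - 1) + 2) / 2) * υt * α) / ((1 - μ) * θt * β₀) < 1 := by
  have hd2 : (2 : ℝ) ≤ d := by exact_mod_cast hd
  have hB : 1 < d * (1 + μ) / (d * (1 + μ) - 2) := by rw [one_lt_div hden]; linarith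
  have hcB := mul_div_two_lt_div_sub_two hden hα
  obtain ⟨β₀, hβ, hβB⟩ := exists_between (max_lt hB hcB)
  have hβ1 : 1 ≤ β₀ := (le_max_left _ _).trans hβ.le
  have hcβ : α * d * (1 + μ) / 2 < β₀ := by linarith [le_max_right 1 (α * (d * (1 + μ)) / 2)]
  obtain ⟨θ, hθ1, hθ⟩ := exists_one_lt_add_lt_mul hcβ
    (show 0 ≤ α * d * (1 - μ) / 2 by have := sub_pos.2 hμ1; positivity)
  refine ⟨θ, 2, (1 - μ) / 2, 0, β₀, hθ1, one_lt_two, by linarith, by linarith, le_rfl,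
    zero_le_one, hβ1, hβB, ?_, ?_, ?_⟩
  · have hpos : 0 < θ + (1 - μ) / 2 - θ * ((1 - μ) / 2) := by nlinarith
    rw [lt_div_iff₀ (mul_pos hα0 hpos)]
    linear_combination hθ
  · rw [lt_div_iff₀ (by positivity)]
    nlinarith
  · simpa using summand_with_half_one_sub_lt_one hd2 hμ0.le hμ1 hα0.le (by linarith) hcβ
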